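/- arXiv:2401.00927 — 6 statements merged into one kernel-verified Lean document; each statement's English description precedes it below -/
import Mathlib

section
/- For all γ ∈ (0,1) and λ ∈ (0,1], the Aragón Artacho–Campoy operator can be written in terms of the Douglas–Rachford operator: T(Aγ,Bγ) = T(A,B) + (1−2λγ)·JA − JB∘RA + 2λγ·JB∘RAγ, i.e. for every x ∈ X, T(Aγ,Bγ)(x) = T(A,B)(x) + (1−2λγ)·JA(x) − JB(RA(x)) + 2λγ·JB(RAγ(x)). -/
theorem aacaStmt4_general {X : Type*} [NormedAddCommGroup X] [InnerProductSpace ℝ X]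
    (JA JB : X → X) (w : X) (γ lam : ℝ)
    (RA RAγ RBγ TAγBγ TAB : X → X)
    (hRAγ : ∀ x, RAγ x = (2 * γ) • JA x + (2 * (1 - γ)) • w - x)
    (hRBγ : ∀ x, RBγ x = (2 * γ) • JB x + (2 * (1 - γ)) • w - x)
    (hT : ∀ x, TAγBγ x = (1 - lam) • x + lam • RBγ (RAγ x))
    (hTAB : ∀ x, TAB x = x - JA x + JB (RA x)) :
    ∀ x : X, TAγBγ x
      = TAB x + (1 - 2 * lam * γ) • JA x - JB (RA x) + (2 * lam * γ) • JB (RAγ x) := by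
  intro x
  rw [hT, hTAB, hRBγ, hRAγ]
  module

theorem aacaStmt4 {X : Type*} [NormedAddCommGroup X] [InnerProductSpace ℝ X] [CompleteSpace X]
    (JA JB : X → X) (w : X) (γ lam : ℝ)
    (hγ : γ ∈ Set.Ioo (0 : ℝ) 1) (hlam : lam ∈ Set.Ioc (0 : ℝ) 1)
    (RA RAγ RBγ TAγBγ TAB : X → X)
    (hRA : ∀ x, RA x = (2 : ℝ) • JA x - x)
    (hRAγ : ∀ x, RAγ x = (2 * γ) • JA x + (2 * (1 - γ)) • w - x)
    (hRBγ : ∀ x, RBγ x = (2 * γ) • JB x + (2 * (1 - γ)) • w - x)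
    (hT : ∀ x, TAγBγ x = (1 - lam) • x + lam • RBγ (RAγ x))
    (hTAB : ∀ x, TAB x = x - JA x + JB (RA x)) :
    ∀ x : X, TAγBγ x
      = TAB x + (1 - 2 * lam * γ) • JA x - JB (RA x) + (2 * lam * γ) • JB (RAγ x) :=
  aacaStmt4_general JA JB w γ lam RA RAγ RBγ TAγBγ TAB hRAγ hRBγ hT hTAB
end

section
/- Suppose JA is an affine map. Then for all γ ∈ (0,1), the perturbed resolvent and perturbed reflected resolvent commute: JAγ ∘ RAγ = RAγ ∘ JAγ, i.e. for every x ∈ X, JAγ(RAγ(x)) = RAγ(JAγ(x)). -/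
/-! The perturbed resolvent `JAγ = γ • JA + (1 - γ) • w` is again affine, and the perturbed
reflected resolvent is `RAγ = 2 • JAγ - id`. An affine map `T` commutes with `2 • T - id`, since
it preserves the affine combination `2 • a + (1 - 2) • b`. -/

section Affine

variable {R E F : Type*} [CommRing R] [AddCommGroup E] [Module R E] [AddCommGroup F] [Module R F]

theorem apply_two_smul_sub_of_affine {f : E → F}
    (hf : ∀ (x y : E) (t : R), f (t • x + (1 - t) • y) = t • f x + (1 - t) • f y) (x y : E) :
    f ((2 : R) • x - y) = (2 : R) • f x - f y := by
  rw [show (2 : R) • x - y = (2 : R) • x + (1 - 2 : R) • y by module, hf]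
  module

theorem apply_two_smul_apply_sub_of_affine {T : E → E}
    (hT : ∀ (x y : E) (t : R), T (t • x + (1 - t) • y) = t • T x + (1 - t) • T y) (x : E) :
    T ((2 : R) • T x - x) = (2 : R) • T (T x) - T x :=
  apply_two_smul_sub_of_affine hT (T x) x

end Affine

theorem aacaStmt7_general {X : Type*} [NormedAddCommGroup X] [InnerProductSpace ℝ X]
    (JA : X → X)
    (hJA : ∀ (x y : X) (t : ℝ), JA (t • x + (1 - t) • y) = t • JA x + (1 - t) • JA y)
    (w : X) (γ : ℝ)
    (JAγ RAγ : X → X)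
    (hJAγ : ∀ x, JAγ x = γ • JA x + (1 - γ) • w)
    (hRAγ : ∀ x, RAγ x = (2 * γ) • JA x + (2 * (1 - γ)) • w - x) :
    ∀ x : X, JAγ (RAγ x) = RAγ (JAγ x) := by
  have hJAγ_affine : ∀ (x y : X) (t : ℝ),
      JAγ (t • x + (1 - t) • y) = t • JAγ x + (1 - t) • JAγ y := by
    intro x y t
    simp only [hJAγ, hJA]
    module
  have hRAγ_eq : ∀ x, RAγ x = (2 : ℝ) • JAγ x - x := by
    intro x
    rw [hRAγ, hJAγ]
    module
  intro x
  rw [hRAγ_eq, hRAγ_eq]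
  exact apply_two_smul_apply_sub_of_affine hJAγ_affine x

theorem aacaStmt7 {X : Type*} [NormedAddCommGroup X] [InnerProductSpace ℝ X] [CompleteSpace X]
    (JA : X → X)
    (hJA : ∀ (x y : X) (t : ℝ), JA (t • x + (1 - t) • y) = t • JA x + (1 - t) • JA y)
    (w : X) (γ : ℝ) (hγ : γ ∈ Set.Ioo (0 : ℝ) 1)
    (JAγ RAγ : X → X)
    (hJAγ : ∀ x, JAγ x = γ • JA x + (1 - γ) • w)
    (hRAγ : ∀ x, RAγ x = (2 * γ) • JA x + (2 * (1 - γ)) • w - x) :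
    ∀ x : X, JAγ (RAγ x) = RAγ (JAγ x) :=
  aacaStmt7_general JA hJA w γ JAγ RAγ hJAγ hRAγ
end

section
/- Suppose JA is an affine map. Then for all γ ∈ (0,1) and λ ∈ (0,1], RAγ∘T(Aγ,Bγ) − T(Bγ,Aγ)∘RAγ = 2γ·(JA∘T(Aγ,Bγ) − (1−λ)·JA − λ·JA∘RBγ∘RAγ), i.e. for every x ∈ X, RAγ(T(Aγ,Bγ)(x)) − T(Bγ,Aγ)(RAγ(x)) = 2γ·(JA(T(Aγ,Bγ)(x)) − (1−λ)·JA(x) − λ·JA(RBγ(RAγ(x)))). -/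
/-!
A map of the form `R x = a • J x + v - x` is affine exactly up to `a` times the failure of `J` to
be affine: along a combination with weights `1 - t` and `t` the constant `v` and the identity
are reproduced exactly, since the weights sum to one. Now `T(Aγ,Bγ) x` combines `x` and
`y := RBγ (RAγ x)` with weights `1 - λ` and `λ`, while `T(Bγ,Aγ) (RAγ x)` combines `RAγ x` and
`RAγ y` with the same weights, so the commutator `RAγ ∘ T(Aγ,Bγ) - T(Bγ,Aγ) ∘ RAγ` is the
affinity defect of `RAγ`, i.e. `2γ` times that of `JA`.
-/

section AffineDefect

variable {K M : Type*} [CommRing K] [AddCommGroup M] [Module K M]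

def affineDefect (f : M → M) (t : K) (x y : M) : M :=
  f ((1 - t) • x + t • y) - ((1 - t) • f x + t • f y)

theorem affineDefect_of_eq_smul_add_sub {J R : M → M} {a : K} {v : M}
    (hR : ∀ x, R x = a • J x + v - x) (t : K) (x y : M) :
    affineDefect R t x y = a • affineDefect J t x y := by
  simp only [affineDefect, hR]
  module

end AffineDefect

theorem aacaStmt9_general {X : Type*} [NormedAddCommGroup X] [InnerProductSpace ℝ X]
    (JA : X → X)
    (w : X) (γ lam : ℝ)
    (RAγ RBγ TAγBγ TBγAγ : X → X)
    (hRAγ : ∀ x, RAγ x = (2 * γ) • JA x + (2 * (1 - γ)) • w - x)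
    (hTAB : ∀ x, TAγBγ x = (1 - lam) • x + lam • RBγ (RAγ x))
    (hTBA : ∀ x, TBγAγ x = (1 - lam) • x + lam • RAγ (RBγ x)) :
    ∀ x : X, RAγ (TAγBγ x) - TBγAγ (RAγ x)
      = (2 * γ) • (JA (TAγBγ x) - (1 - lam) • JA x - lam • JA (RBγ (RAγ x))) := by
  intro x
  have hdefect := affineDefect_of_eq_smul_add_sub hRAγ lam x (RBγ (RAγ x))
  rw [affineDefect, affineDefect, ← hTAB, ← hTBA, sub_add_eq_sub_sub] at hdefect
  exact hdefect

theorem aacaStmt9 {X : Type*} [NormedAddCommGroup X] [InnerProductSpace ℝ X] [CompleteSpace X]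
    (JA JB : X → X)
    (hJA : ∀ (x y : X) (t : ℝ), JA (t • x + (1 - t) • y) = t • JA x + (1 - t) • JA y)
    (w : X) (γ lam : ℝ)
    (hγ : γ ∈ Set.Ioo (0 : ℝ) 1) (hlam : lam ∈ Set.Ioc (0 : ℝ) 1)
    (RAγ RBγ TAγBγ TBγAγ : X → X)
    (hRAγ : ∀ x, RAγ x = (2 * γ) • JA x + (2 * (1 - γ)) • w - x)
    (hRBγ : ∀ x, RBγ x = (2 * γ) • JB x + (2 * (1 - γ)) • w - x)
    (hTAB : ∀ x, TAγBγ x = (1 - lam) • x + lam • RBγ (RAγ x))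
    (hTBA : ∀ x, TBγAγ x = (1 - lam) • x + lam • RAγ (RBγ x)) :
    ∀ x : X, RAγ (TAγBγ x) - TBγAγ (RAγ x)
      = (2 * γ) • (JA (TAγBγ x) - (1 - lam) • JA x - lam • JA (RBγ (RAγ x))) :=
  aacaStmt9_general JA w γ lam RAγ RBγ TAγBγ TBγAγ hRAγ hTAB hTBA
end

section
/- Main theorem: suppose JA is an affine map. Then for all γ ∈ (0,1), λ ∈ (0,1] and every natural number n, RAγ ∘ T(Aγ,Bγ)^n = T(Bγ,Aγ)^n ∘ RAγ, where T^n denotes the n-fold composition of T with itself; i.e. for every x ∈ X, RAγ(T(Aγ,Bγ)^n(x)) = T(Bγ,Aγ)^n(RAγ(x)). -/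
/-!
Since `J_A` preserves affine combinations, so does `R_A^γ = 2γ J_A + 2(1-γ) w - Id`. Hence `R_A^γ`
maps the averaged point `(1-λ) x + λ R_B^γ (R_A^γ x)` to `(1-λ) R_A^γ x + λ R_A^γ (R_B^γ (R_A^γ x))`,
i.e. `R_A^γ ∘ T_{A,B} = T_{B,A} ∘ R_A^γ`, and a semiconjugacy passes to all iterates.
-/

section AffineFun

variable (R : Type*) {M : Type*} [CommRing R] [AddCommGroup M] [Module R M]

def IsAffineFun (F : M → M) : Prop :=
  ∀ (x y : M) (t : R), F (t • x + (1 - t) • y) = t • F x + (1 - t) • F y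

variable {R}

theorem IsAffineFun.smul_add_sub {J : M → M} (hJ : IsAffineFun R J) (a : R) (b : M) :
    IsAffineFun R (fun x => a • J x + b - x) := by
  intro x y t
  simp only [hJ x y t]
  module

theorem IsAffineFun.semiconj_averaged_comp {F : M → M} (hF : IsAffineFun R F)
    (S : M → M) (l : R) :
    Function.Semiconj F (fun x => (1 - l) • x + l • S (F x))
      (fun x => (1 - l) • x + l • F (S x)) := by
  intro x
  simpa using hF x (S (F x)) (1 - l)

end AffineFun

theorem aacaStmt10_general {X : Type*} [NormedAddCommGroup X] [InnerProductSpace ℝ X]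
    (JA : X → X)
    (hJA : ∀ (x y : X) (t : ℝ), JA (t • x + (1 - t) • y) = t • JA x + (1 - t) • JA y)
    (w : X) (γ lam : ℝ)
    (RAγ RBγ TAγBγ TBγAγ : X → X)
    (hRAγ : ∀ x, RAγ x = (2 * γ) • JA x + (2 * (1 - γ)) • w - x)
    (hTAB : ∀ x, TAγBγ x = (1 - lam) • x + lam • RBγ (RAγ x))
    (hTBA : ∀ x, TBγAγ x = (1 - lam) • x + lam • RAγ (RBγ x)) :
    ∀ (n : ℕ) (x : X), RAγ (TAγBγ^[n] x) = TBγAγ^[n] (RAγ x) := by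
  have hRA : IsAffineFun ℝ RAγ := by
    obtain rfl : RAγ = _ := funext hRAγ
    exact IsAffineFun.smul_add_sub hJA _ _
  obtain rfl : TAγBγ = _ := funext hTAB
  obtain rfl : TBγAγ = _ := funext hTBA
  exact fun n => (hRA.semiconj_averaged_comp RBγ lam).iterate_right n

theorem aacaStmt10 {X : Type*} [NormedAddCommGroup X] [InnerProductSpace ℝ X] [CompleteSpace X]
    (JA JB : X → X)
    (hJA : ∀ (x y : X) (t : ℝ), JA (t • x + (1 - t) • y) = t • JA x + (1 - t) • JA y)
    (w : X) (γ lam : ℝ)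
    (hγ : γ ∈ Set.Ioo (0 : ℝ) 1) (hlam : lam ∈ Set.Ioc (0 : ℝ) 1)
    (RAγ RBγ TAγBγ TBγAγ : X → X)
    (hRAγ : ∀ x, RAγ x = (2 * γ) • JA x + (2 * (1 - γ)) • w - x)
    (hRBγ : ∀ x, RBγ x = (2 * γ) • JB x + (2 * (1 - γ)) • w - x)
    (hTAB : ∀ x, TAγBγ x = (1 - lam) • x + lam • RBγ (RAγ x))
    (hTBA : ∀ x, TBγAγ x = (1 - lam) • x + lam • RAγ (RBγ x)) :
    ∀ (n : ℕ) (x : X), RAγ (TAγBγ^[n] x) = TBγAγ^[n] (RAγ x) :=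
  aacaStmt10_general JA hJA w γ lam RAγ RBγ TAγBγ TBγAγ hRAγ hTAB hTBA
end

section
/- Suppose JA and JB are affine maps and that RAγ∘RAγ = RBγ∘RBγ. Then for all γ ∈ (0,1) and λ ∈ (0,1], the two Aragón Artacho–Campoy operators commute: T(Aγ,Bγ)∘T(Bγ,Aγ) = T(Bγ,Aγ)∘T(Aγ,Bγ). -/
/-!
Affine maps compose to affine maps, and reflected resolvents of affine resolvents are affine, so
`S := RBγ ∘ RAγ` and `U := RAγ ∘ RBγ` are affine. The hypothesis `RAγ² = RBγ²` makes `S` and `U`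
commute, since both `S ∘ U` and `U ∘ S` equal `RBγ⁴`. Relaxations `(1 - λ) id + λ S` and
`(1 - λ) id + λ U` of commuting affine maps commute: expanding either composition gives
`(1 - λ)² x + λ(1 - λ)(S x + U x) + λ² S (U x)`.
-/

section

variable (R : Type*) {E : Type*} [CommRing R] [AddCommGroup E] [Module R E]

def PreservesAffineCombinations (f : E → E) : Prop :=
  ∀ (x y : E) (t : R), f (t • x + (1 - t) • y) = t • f x + (1 - t) • f y

variable {R}

namespace PreservesAffineCombinations

theorem comp {f g : E → E} (hf : PreservesAffineCombinations R f)
    (hg : PreservesAffineCombinations R g) : PreservesAffineCombinations R (f ∘ g) := by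
  intro x y t
  simp only [Function.comp_apply, hg x y t, hf (g x) (g y) t]

theorem smul_add_sub_self {J : E → E} (hJ : PreservesAffineCombinations R J) (a : R) (c : E) :
    PreservesAffineCombinations R (fun x => a • J x + c - x) := by
  intro x y t
  simp only [hJ x y t]
  module

theorem map_relax {f : E → E} (hf : PreservesAffineCombinations R f) (lam : R) (x y : E) :
    f ((1 - lam) • x + lam • y) = (1 - lam) • f x + lam • f y := by
  simpa only [sub_sub_cancel] using hf x y (1 - lam)

theorem commute_relax {P Q : E → E} (hP : PreservesAffineCombinations R P)
    (hQ : PreservesAffineCombinations R Q) (hPQ : Function.Commute P Q) (lam : R) :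
    Function.Commute (fun x => (1 - lam) • x + lam • P x) (fun x => (1 - lam) • x + lam • Q x) := by
  intro x
  simp only [hP.map_relax, hQ.map_relax, hPQ x]
  module

end PreservesAffineCombinations

end

theorem Function.commute_comp_of_comp_self_eq {α : Type*} {f g : α → α}
    (h : ∀ x, f (f x) = g (g x)) : Function.Commute (g ∘ f) (f ∘ g) := by
  intro x
  simp only [Function.comp_apply]
  rw [h (g x), ← h (f x), h (f (f x)), h x]

theorem aacaStmt14_general {X : Type*} [NormedAddCommGroup X] [InnerProductSpace ℝ X]
    (JA JB : X → X)
    (hJA : ∀ (x y : X) (t : ℝ), JA (t • x + (1 - t) • y) = t • JA x + (1 - t) • JA y)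
    (hJB : ∀ (x y : X) (t : ℝ), JB (t • x + (1 - t) • y) = t • JB x + (1 - t) • JB y)
    (w : X) (γ lam : ℝ)
    (RAγ RBγ TAγBγ TBγAγ : X → X)
    (hRAγ : ∀ x, RAγ x = (2 * γ) • JA x + (2 * (1 - γ)) • w - x)
    (hRBγ : ∀ x, RBγ x = (2 * γ) • JB x + (2 * (1 - γ)) • w - x)
    (hTAB : ∀ x, TAγBγ x = (1 - lam) • x + lam • RBγ (RAγ x))
    (hTBA : ∀ x, TBγAγ x = (1 - lam) • x + lam • RAγ (RBγ x))
    (hsq : ∀ x : X, RAγ (RAγ x) = RBγ (RBγ x)) :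
    ∀ x : X, TAγBγ (TBγAγ x) = TBγAγ (TAγBγ x) := by
  have hA : PreservesAffineCombinations ℝ RAγ := by
    rw [funext hRAγ]
    exact PreservesAffineCombinations.smul_add_sub_self hJA _ _
  have hB : PreservesAffineCombinations ℝ RBγ := by
    rw [funext hRBγ]
    exact PreservesAffineCombinations.smul_add_sub_self hJB _ _
  rw [funext hTAB, funext hTBA]
  exact (hB.comp hA).commute_relax (hA.comp hB) (Function.commute_comp_of_comp_self_eq hsq) lam

theorem aacaStmt14 {X : Type*} [NormedAddCommGroup X] [InnerProductSpace ℝ X] [CompleteSpace X]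
    (JA JB : X → X)
    (hJA : ∀ (x y : X) (t : ℝ), JA (t • x + (1 - t) • y) = t • JA x + (1 - t) • JA y)
    (hJB : ∀ (x y : X) (t : ℝ), JB (t • x + (1 - t) • y) = t • JB x + (1 - t) • JB y)
    (w : X) (γ lam : ℝ)
    (hγ : γ ∈ Set.Ioo (0 : ℝ) 1) (hlam : lam ∈ Set.Ioc (0 : ℝ) 1)
    (RAγ RBγ TAγBγ TBγAγ : X → X)
    (hRAγ : ∀ x, RAγ x = (2 * γ) • JA x + (2 * (1 - γ)) • w - x)
    (hRBγ : ∀ x, RBγ x = (2 * γ) • JB x + (2 * (1 - γ)) • w - x)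
    (hTAB : ∀ x, TAγBγ x = (1 - lam) • x + lam • RBγ (RAγ x))
    (hTBA : ∀ x, TBγAγ x = (1 - lam) • x + lam • RAγ (RBγ x))
    (hsq : ∀ x : X, RAγ (RAγ x) = RBγ (RBγ x)) :
    ∀ x : X, TAγBγ (TBγAγ x) = TBγAγ (TAγBγ x) :=
  aacaStmt14_general JA JB hJA hJB w γ lam RAγ RBγ TAγBγ TBγAγ hRAγ hRBγ hTAB hTBA hsq
end

section
/- With A(x) = x − v and B the projection onto a + U, the Aragón Artacho–Campoy operator T(Aγ,Bγ) is given explicitly by T(Aγ,Bγ)(x) = (1 − λγ(3 − 2γ))·x + λγ(1 − γ)·P_U(x) + k for every x ∈ X, where k := λγ·((2γ − 1)·v + 4(1 − γ)·w − 2(1 − γ)·P_U(w) − 2·P_{U⊥}(a)). -/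
theorem aacaStmt18 {X : Type*} [NormedAddCommGroup X] [InnerProductSpace ℝ X] [CompleteSpace X]
    (U : Submodule ℝ X) [CompleteSpace U] (a v w : X) (hv : v ∈ Uᗮ)
    (γ lam : ℝ) (hγ : γ ∈ Set.Ioo (0 : ℝ) 1) (hlam : lam ∈ Set.Ioc (0 : ℝ) 1)
    (PU PUperp JA JB RAγ RBγ TAγBγ : X → X)
    (hPU : ∀ x, PU x = (U.orthogonalProjection x : X))
    (hPUperp : ∀ x, PUperp x = x - PU x)
    (hJA : ∀ x, JA x = (1 / 2 : ℝ) • (x + v))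
    (hJB : ∀ y, JB y = y - (1 / 2 : ℝ) • PU y - PUperp a)
    (hRAγ : ∀ x, RAγ x = (2 * γ) • JA x + (2 * (1 - γ)) • w - x)
    (hRBγ : ∀ x, RBγ x = (2 * γ) • JB x + (2 * (1 - γ)) • w - x)
    (hT : ∀ x, TAγBγ x = (1 - lam) • x + lam • RBγ (RAγ x)) :
    ∀ x : X, TAγBγ x
      = (1 - lam * γ * (3 - 2 * γ)) • x + (lam * γ * (1 - γ)) • PU x
        + (lam * γ) • ((2 * γ - 1) • v + (4 * (1 - γ)) • w
            - (2 * (1 - γ)) • PU w - (2 : ℝ) • PUperp a) := by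
  intro x
  have hv0 : (U.orthogonalProjection v : X) = 0 := by
    rw [Submodule.orthogonalProjectionOnto_apply_of_mem_orthogonal hv]
    simp
  have hproj : ∀ y, PU y = (U.orthogonalProjection y : X) := hPU
  simp only [hT, hRBγ, hJB, hPUperp, hRAγ, hJA, hPU, smul_add, smul_sub, smul_smul,
    map_add, map_sub, map_smul, Submodule.coe_add, Submodule.coe_sub, SetLike.val_smul,
    hv0, smul_zero, Submodule.orthogonalProjectionOnto_mem_subspace_eq_self,
    Submodule.orthogonalProjectionOnto_starProjection_of_le le_rfl]
  module
end
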